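/- If a finite group action of sort-preserving finite permutations of names acts on a set X and every x ∈ X has some finite supporting set, then every x ∈ X has a least supporting set (the support ν(x)). -/
import Mathlib


/-- Finite sort-preserving permutations of a set of names. -/
def FinPerm {Name SortT : Type*} (srt : Name → SortT) : Type _ :=
  {π : Equiv.Perm Name // (∀ a, srt (π a) = srt a) ∧ {a | π a ≠ a}.Finite}

/-- `S` supports `x` with respect to the permutation action `act`:
any finite permutation fixing every element of `S` fixes `x`. -/
def SupportsA {Name SortT X : Type*} {srt : Name → SortT}
    (act : FinPerm srt → X → X) (S : Finset Name) (x : X) : Prop :=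
  ∀ π : FinPerm srt, (∀ a ∈ S, π.1 a = a) → act π x = x

private lemma moved_mul_finite {Name : Type*} (f g : Equiv.Perm Name)
    (hf : {a | f a ≠ a}.Finite) (hg : {a | g a ≠ a}.Finite) :
    {a | (f * g) a ≠ a}.Finite := by
  refine (hf.union hg).subset ?_
  intro a ha
  simp only [Set.mem_union, Set.mem_setOf_eq]
  by_contra h
  push_neg at h
  obtain ⟨h1, h2⟩ := h
  exact ha (by simp [Equiv.Perm.mul_apply, h2, h1])

private lemma moved_inv_finite {Name : Type*} (f : Equiv.Perm Name)
    (hf : {a | f a ≠ a}.Finite) : {a | f⁻¹ a ≠ a}.Finite := by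
  refine hf.subset ?_
  intro a ha
  simp only [Set.mem_setOf_eq] at ha ⊢
  intro h
  apply ha
  conv_lhs => rw [← h]
  simp

/-- Construct a sort-preserving finite permutation moving `D` out of `A`,
and moving nothing inside `A` except `D`. -/
private lemma exists_fresh_perm {Name SortT : Type*} [DecidableEq Name] (srt : Name → SortT)
    (hinf : ∀ t : SortT, {a : Name | srt a = t}.Infinite) (A : Finset Name) :
    ∀ D : Finset Name, D ⊆ A →
    ∃ σ : Equiv.Perm Name, (∀ a, srt (σ a) = srt a) ∧ {a | σ a ≠ a}.Finite ∧
      (∀ a ∈ D, σ a ∉ A) ∧ (∀ a, σ a ≠ a → a ∈ D ∨ a ∉ A) := by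
  intro D
  induction D using Finset.induction_on with
  | empty =>
      intro _
      exact ⟨1, fun a => rfl, by simp, by simp, by simp⟩
  | @insert a s ha ih =>
      intro hDA
      obtain ⟨σ', hsort', hfin', hout', hmov'⟩ := ih (fun c hc => hDA (Finset.mem_insert_of_mem hc))
      have haA : a ∈ A := hDA (Finset.mem_insert_self a s)
      have hσ'a : σ' a = a := by
        by_contra h
        rcases hmov' a h with h1 | h2
        · exact ha h1
        · exact h2 haA
      obtain ⟨b, hb⟩ := ((hinf (srt a)).diff (A.finite_toSet.union hfin')).nonempty
      obtain ⟨hbsort, hbavoid⟩ := hb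
      simp only [Set.mem_setOf_eq] at hbsort
      rw [Set.mem_union] at hbavoid
      push_neg at hbavoid
      obtain ⟨hbA, hbmov⟩ := hbavoid
      simp only [Finset.mem_coe] at hbA
      have hσ'b : σ' b = b := by
        by_contra h; exact hbmov h
      have hab : a ≠ b := fun h => hbA (h ▸ haA)
      refine ⟨σ' * Equiv.swap a b, ?_, ?_, ?_, ?_⟩
      · intro c
        have hswap : srt (Equiv.swap a b c) = srt c := by
          rcases eq_or_ne c a with rfl | hca
          · rw [Equiv.swap_apply_left]; exact hbsort
          · rcases eq_or_ne c b with rfl | hcb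
            · rw [Equiv.swap_apply_right]; exact hbsort.symm
            · rw [Equiv.swap_apply_of_ne_of_ne hca hcb]
        rw [Equiv.Perm.mul_apply, hsort', hswap]
      · exact moved_mul_finite _ _ hfin' (by
          refine Set.Finite.subset ((Set.finite_singleton b).insert a) ?_
          intro c hc
          simp only [Set.mem_setOf_eq] at hc
          by_contra h
          simp only [Set.mem_insert_iff, Set.mem_singleton_iff] at h
          push_neg at h
          exact hc (Equiv.swap_apply_of_ne_of_ne h.1 h.2))
      · intro c hc
        rcases Finset.mem_insert.mp hc with rfl | hcs
        · simpa [Equiv.Perm.mul_apply, Equiv.swap_apply_left, hσ'b] using hbA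
        · have hca : c ≠ a := fun h => ha (h ▸ hcs)
          have hcb : c ≠ b := fun h => hbA (h ▸ hDA (Finset.mem_insert_of_mem hcs))
          rw [Equiv.Perm.mul_apply, Equiv.swap_apply_of_ne_of_ne hca hcb]
          exact hout' c hcs
      · intro c hc
        rcases eq_or_ne c a with rfl | hca
        · exact Or.inl (Finset.mem_insert_self _ _)
        · rcases eq_or_ne c b with rfl | hcb
          · exact Or.inr hbA
          · rw [Equiv.Perm.mul_apply, Equiv.swap_apply_of_ne_of_ne hca hcb] at hc
            rcases hmov' c hc with h1 | h2
            · exact Or.inl (Finset.mem_insert_of_mem h1)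
            · exact Or.inr h2

/-- given an action of finite sort-preserving permutations on X
satisfying the action laws, with infinitely many names of each sort, if every
element has some finite supporting set then the intersection of two finite
supporting sets is again supporting, and every element has a least finite
supporting set (its support ν(x)). -/
theorem least_support_exists {Name SortT X : Type*} [DecidableEq Name]
    (srt : Name → SortT)
    (hinf : ∀ t : SortT, {a : Name | srt a = t}.Infinite)
    (act : FinPerm srt → X → X)
    (hcomp : ∀ (π π' σ : FinPerm srt) (x : X),
      σ.1 = π.1 * π'.1 → act σ x = act π (act π' x))
    (hid : ∀ (π : FinPerm srt) (x : X), π.1 = 1 → act π x = x)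
    (hfs : ∀ x : X, ∃ S : Finset Name, SupportsA act S x) :
    (∀ (x : X) (S T : Finset Name),
      SupportsA act S x → SupportsA act T x → SupportsA act (S ∩ T) x) ∧
    (∀ x : X, ∃ S : Finset Name, SupportsA act S x ∧
      ∀ T : Finset Name, SupportsA act T x → S ⊆ T) := by
  classical
  have inter : ∀ (x : X) (S T : Finset Name),
      SupportsA act S x → SupportsA act T x → SupportsA act (S ∩ T) x := by
    intro x S T hS hT π hπ
    -- M : finite set of names moved by π
    set M : Finset Name := π.2.2.toFinset with hM
    have hMmem : ∀ c, π.1 c ≠ c → c ∈ M := by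
      intro c hc; rw [hM, Set.Finite.mem_toFinset]; exact hc
    set A : Finset Name := S ∪ T ∪ M with hA
    have hDA : S \ T ⊆ A := fun c hc =>
      Finset.mem_union_left _ (Finset.mem_union_left _ (Finset.mem_sdiff.mp hc).1)
    obtain ⟨σ, hsort, hfin, hout, hmov⟩ := exists_fresh_perm srt hinf A (S \ T) hDA
    have hsortinv : ∀ a, srt (σ⁻¹ a) = srt a := by
      intro a
      conv_rhs => rw [← Equiv.apply_symm_apply σ a]
      exact (hsort _).symm
    -- σ as a FinPerm
    set σfp : FinPerm srt := ⟨σ, hsort, hfin⟩ with hσfp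
    -- ρ = σ⁻¹ π σ as a FinPerm
    have hρsort : ∀ a, srt ((σ⁻¹ * π.1 * σ) a) = srt a := by
      intro a
      simp only [Equiv.Perm.mul_apply]
      rw [hsortinv, π.2.1, hsort]
    have hρfin : {a | (σ⁻¹ * π.1 * σ) a ≠ a}.Finite :=
      moved_mul_finite _ _ (moved_mul_finite _ _ (moved_inv_finite _ hfin) π.2.2) hfin
    set ρfp : FinPerm srt := ⟨σ⁻¹ * π.1 * σ, hρsort, hρfin⟩ with hρfp
    -- σ fixes T pointwise, hence act σfp x = x
    have hσT : ∀ a ∈ T, σ a = a := by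
      intro a haT
      by_contra h
      rcases hmov a h with h1 | h2
      · exact (Finset.mem_sdiff.mp h1).2 haT
      · exact h2 (Finset.mem_union_left _ (Finset.mem_union_right _ haT))
    have hσx : act σfp x = x := hT σfp hσT
    -- ρ fixes S pointwise
    have hρS : ∀ a ∈ S, ρfp.1 a = a := by
      intro a haS
      by_cases haT : a ∈ T
      · have hσa : σ a = a := hσT a haT
        have hπa : π.1 a = a := hπ a (Finset.mem_inter.mpr ⟨haS, haT⟩)
        show (σ⁻¹ * π.1 * σ) a = a
        simp only [Equiv.Perm.mul_apply, hσa, hπa]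
        conv_lhs => rw [← hσa]
        simp
      · have haD : a ∈ S \ T := Finset.mem_sdiff.mpr ⟨haS, haT⟩
        have hσaA : σ a ∉ A := hout a haD
        have hπσa : π.1 (σ a) = σ a := by
          by_contra h
          exact hσaA (Finset.mem_union_right _ (hMmem _ h))
        show (σ⁻¹ * π.1 * σ) a = a
        simp only [Equiv.Perm.mul_apply, hπσa]
        simp
    have hρx : act ρfp x = x := hS ρfp hρS
    -- combine: π σ = σ ρ
    set τfp : FinPerm srt := ⟨π.1 * σ, fun a => by
        simp only [Equiv.Perm.mul_apply]; rw [π.2.1, hsort],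
      moved_mul_finite _ _ π.2.2 hfin⟩ with hτfp
    have h1 : act τfp x = act π (act σfp x) := hcomp π σfp τfp x rfl
    have h2 : act τfp x = act σfp (act ρfp x) := by
      refine hcomp σfp ρfp τfp x ?_
      show π.1 * σ = σ * (σ⁻¹ * π.1 * σ)
      group
    rw [hσx] at h1
    rw [hρx, hσx] at h2
    rw [← h1, h2]
  refine ⟨inter, ?_⟩
  intro x
  have hex : ∃ n : ℕ, ∃ S : Finset Name, SupportsA act S x ∧ S.card = n := by
    obtain ⟨S, hS⟩ := hfs x
    exact ⟨S.card, S, hS, rfl⟩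
  obtain ⟨S, hS, hcard⟩ := Nat.find_spec hex
  refine ⟨S, hS, ?_⟩
  intro T hT
  have hST : SupportsA act (S ∩ T) x := inter x S T hS hT
  have hle : Nat.find hex ≤ (S ∩ T).card :=
    Nat.find_min' hex ⟨S ∩ T, hST, rfl⟩
  have heq : S ∩ T = S :=
    Finset.eq_of_subset_of_card_le Finset.inter_subset_left (by omega)
  intro a haS
  rw [← heq] at haS
  exact (Finset.mem_inter.mp haS).2
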